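/- Let B be a finite list of bids on n goods and p ∈ ℝ^n, and suppose B is locally valid at p, i.e. its indirect utility function f_B is convex on some open ball of positive radius around p. Let B' be the bid list obtained by replacing the value vector of every bid of B by its projection with respect to p (keeping the weights). Then B' is 1/2-valid at p; that is, f_{B'} is convex on the open ball {q ∈ ℝ^n : ‖q − p‖_∞ < 1/2}. -/

import Mathlib

open Finset

noncomputable section

variable {n : ℕ}

/-- Extend a value/price vector in `ℝ^n` by a 0-th coordinate (the reject good) equal to 0. -/
def extVec (b : Fin n → ℝ) : Fin (n + 1) → ℝ := Fin.cons 0 b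

/-- Surplus of good `i` (in `{0,…,n}`) for value vector `b` at price `p`. -/
def surplus (b p : Fin n → ℝ) (i : Fin (n + 1)) : ℝ := extVec b i - extVec p i

/-- Maximal surplus over all goods (including the reject good). -/
def maxSurplus (b p : Fin n → ℝ) : ℝ :=
  Finset.univ.sup' Finset.univ_nonempty (surplus b p)

/-- The bid with value vector `b` demands good `i` at price `p`. -/
def Demands (b p : Fin n → ℝ) (i : Fin (n + 1)) : Prop :=
  ∀ j, surplus b p j ≤ surplus b p i

open Classical in
/-- The set of goods demanded by value vector `b` at price `p`. -/
def demandedSet (b p : Fin n → ℝ) : Finset (Fin (n + 1)) :=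
  Finset.univ.filter fun i => Demands b p i

/-- Indirect utility function of a bid list (bids are pairs of value vector and weight). -/
def indirectUtility (B : List ((Fin n → ℝ) × ℝ)) (p : Fin n → ℝ) : ℝ :=
  (B.map fun bw => bw.2 * maxSurplus bw.1 p).sum

/-- Surplus gap of the bid `b` at `p`: maximal surplus minus the best surplus on
a non-demanded good (junk value when every good is demanded). -/
def surplusGap (b p : Fin n → ℝ) : ℝ :=
  maxSurplus b p - sSup (surplus b p '' {i | i ∉ demandedSet b p})

/-- `B` is `ε`-valid at `p` if its indirect utility function is convex on the open
`L∞`-ball of radius `ε` around `p`. -/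
def epsValid (B : List ((Fin n → ℝ) × ℝ)) (p : Fin n → ℝ) (ε : ℝ) : Prop :=
  ConvexOn ℝ {q : Fin n → ℝ | ‖q - p‖ < ε} (indirectUtility B)

open Classical in
/-- Sum of the weights of bids in `B` that are marginal on both `i` and `i'` at `p`. -/
def marginalWeight (B : List ((Fin n → ℝ) × ℝ)) (p : Fin n → ℝ) (i i' : Fin (n + 1)) : ℝ :=
  (B.map fun bw => if Demands bw.1 p i ∧ Demands bw.1 p i' then bw.2 else 0).sum


open Classical in
/-- The projection of value vector `b` with respect to price `p`: where `I` is the set of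
goods demanded by `b` at `p`, subtract the indicator vector of `{0,…,n} ∖ I` if `0 ∈ I`,
and otherwise add the indicator vector of `I`. (The 0-th coordinate is unaffected in
either case, so this is well-defined as an operation on `ℝ^n`.) -/
def project (b p : Fin n → ℝ) : Fin n → ℝ := fun k =>
  if (0 : Fin (n + 1)) ∈ demandedSet b p then
    b k - (if k.succ ∈ demandedSet b p then 0 else 1)
  else
    b k + (if k.succ ∈ demandedSet b p then 1 else 0)

/-! Near `p` only the goods demanded at `p` matter, so `f_B (p + v) = f_B p + D v` for small `v`,
where `D = indirectUtilityDirDeriv B p` is positively homogeneous. Convexity of `f_B` near `p`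
makes `D` convex near `0`, hence everywhere. Projecting a bid keeps its demanded set at `p` but
puts every non-demanded good at least `1` below the demanded ones; a price move of size `< 1/2`
cannot close that gap, so on the `1/2`-ball the projected list satisfies
`f_B' q = f_B' p + D (q - p)`, which is convex. -/

open Filter Topology Metric

theorem ConvexOn.univ_of_pos_homogeneous {E : Type*} [AddCommGroup E] [Module ℝ E]
    [TopologicalSpace E] [ContinuousSMul ℝ E] {s : Set E} {φ : E → ℝ} (hs : s ∈ 𝓝 0)
    (hφ : ConvexOn ℝ s φ) (hhom : ∀ t : ℝ, 0 < t → ∀ v, φ (t • v) = t * φ v) :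
    ConvexOn ℝ Set.univ φ := by
  refine ⟨convex_univ, fun x _ y _ a b ha hb hab => ?_⟩
  have small (z : E) : ∀ᶠ t in 𝓝 (0 : ℝ), t • z ∈ s :=
    (continuous_id.smul continuous_const).tendsto' 0 0 (zero_smul ℝ z) hs
  obtain ⟨t, ⟨htx, hty⟩, ht⟩ := (((small x).and (small y)).filter_mono nhdsWithin_le_nhds
    |>.and (self_mem_nhdsWithin (s := Set.Ioi 0))).exists
  have key := hφ.2 htx hty ha hb hab
  rw [smul_comm a t x, smul_comm b t y, ← smul_add, hhom t ht, hhom t ht, hhom t ht] at key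
  simp only [smul_eq_mul] at key ⊢
  exact le_of_mul_le_mul_left (key.trans_eq (by ring)) ht

lemma mem_demandedSet {b p : Fin n → ℝ} {i : Fin (n + 1)} :
    i ∈ demandedSet b p ↔ Demands b p i := by
  classical
  simp [demandedSet]

lemma demandedSet_nonempty (b p : Fin n → ℝ) : (demandedSet b p).Nonempty := by
  obtain ⟨i, -, hi⟩ := Finset.exists_mem_eq_sup' Finset.univ_nonempty (surplus b p)
  exact ⟨i, mem_demandedSet.2 fun j => hi ▸ Finset.le_sup' _ (Finset.mem_univ j)⟩

lemma surplus_eq_maxSurplus {b p : Fin n → ℝ} {i : Fin (n + 1)} (hi : i ∈ demandedSet b p) :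
    surplus b p i = maxSurplus b p :=
  le_antisymm (Finset.le_sup' _ (Finset.mem_univ i))
    (Finset.sup'_le _ _ fun j _ => mem_demandedSet.1 hi j)

lemma extVec_sub (a b : Fin n → ℝ) : extVec (a - b) = extVec a - extVec b := by
  funext i
  induction i using Fin.cases <;> simp [extVec]

lemma extVec_smul (c : ℝ) (a : Fin n → ℝ) : extVec (c • a) = c • extVec a := by
  funext i
  induction i using Fin.cases <;> simp [extVec]

lemma abs_extVec_le_norm (v : Fin n → ℝ) (j : Fin (n + 1)) : |extVec v j| ≤ ‖v‖ := by
  induction j using Fin.cases with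
  | zero => simp [extVec]
  | succ k => simpa [extVec] using norm_le_pi_norm v k

lemma continuous_surplus_apply (b : Fin n → ℝ) (j : Fin (n + 1)) :
    Continuous fun q => surplus b q j :=
  continuous_const.sub ((continuous_apply j).comp (continuous_const.finCons continuous_id))

lemma surplus_eq_surplus_sub (b p q : Fin n → ℝ) (j : Fin (n + 1)) :
    surplus b q j = surplus b p j - extVec (q - p) j := by
  rw [extVec_sub]
  simp only [surplus, Pi.sub_apply]
  ring

lemma maxSurplus_eq_sup'_of_forall_exists_le {b q : Fin n → ℝ} {s : Finset (Fin (n + 1))}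
    (hs : s.Nonempty) (h : ∀ j, ∃ i ∈ s, surplus b q j ≤ surplus b q i) :
    maxSurplus b q = s.sup' hs (surplus b q) :=
  le_antisymm
    (Finset.sup'_le _ _ fun j _ =>
      let ⟨_, hi, hji⟩ := h j
      hji.trans (Finset.le_sup' _ hi))
    (Finset.sup'_mono _ (Finset.subset_univ s) hs)

def maxSurplusDirDeriv (b p v : Fin n → ℝ) : ℝ :=
  (demandedSet b p).sup' (demandedSet_nonempty b p) fun i => -extVec v i

def indirectUtilityDirDeriv (B : List ((Fin n → ℝ) × ℝ)) (p v : Fin n → ℝ) : ℝ :=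
  (B.map fun bw => bw.2 * maxSurplusDirDeriv bw.1 p v).sum

lemma maxSurplusDirDeriv_smul (b p v : Fin n → ℝ) {t : ℝ} (ht : 0 ≤ t) :
    maxSurplusDirDeriv b p (t • v) = t * maxSurplusDirDeriv b p v := by
  simp only [maxSurplusDirDeriv, extVec_smul, Finset.mul₀_sup' ht, Pi.smul_apply, smul_eq_mul,
    mul_neg]

lemma indirectUtilityDirDeriv_smul (B : List ((Fin n → ℝ) × ℝ)) (p v : Fin n → ℝ) {t : ℝ}
    (ht : 0 ≤ t) : indirectUtilityDirDeriv B p (t • v) = t * indirectUtilityDirDeriv B p v := by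
  simp only [indirectUtilityDirDeriv, maxSurplusDirDeriv_smul _ _ _ ht, ← List.sum_map_mul_left,
    mul_left_comm t]

lemma maxSurplus_eq_add_dirDeriv {b p q : Fin n → ℝ}
    (h : ∀ j, ∃ i ∈ demandedSet b p, surplus b q j ≤ surplus b q i) :
    maxSurplus b q = maxSurplus b p + maxSurplusDirDeriv b p (q - p) := by
  rw [maxSurplus_eq_sup'_of_forall_exists_le (demandedSet_nonempty b p) h, maxSurplusDirDeriv,
    Finset.add_sup']
  refine Finset.sup'_congr _ rfl fun i hi => ?_
  rw [surplus_eq_surplus_sub b p q, surplus_eq_maxSurplus hi, sub_eq_add_neg]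

lemma eventually_forall_exists_demanded_le (b p : Fin n → ℝ) :
    ∀ᶠ q in 𝓝 p, ∀ j, ∃ i ∈ demandedSet b p, surplus b q j ≤ surplus b q i := by
  obtain ⟨i₀, hi₀⟩ := demandedSet_nonempty b p
  refine Filter.eventually_all.2 fun j => ?_
  by_cases hj : j ∈ demandedSet b p
  · exact Filter.Eventually.of_forall fun _ => ⟨j, hj, le_rfl⟩
  · have hlt : surplus b p j < surplus b p i₀ := by
      obtain ⟨k, hk⟩ := not_forall.1 (mt mem_demandedSet.2 hj)
      rw [surplus_eq_maxSurplus hi₀]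
      exact (not_le.1 hk).trans_le (Finset.le_sup' _ (Finset.mem_univ k))
    exact ((continuous_surplus_apply b j).continuousAt.eventually_lt
      (continuous_surplus_apply b i₀).continuousAt hlt).mono fun _ hq => ⟨i₀, hi₀, hq.le⟩

lemma indirectUtility_eq_add_dirDeriv {B : List ((Fin n → ℝ) × ℝ)} {p q : Fin n → ℝ}
    (h : ∀ bw ∈ B, ∀ j, ∃ i ∈ demandedSet bw.1 p, surplus bw.1 q j ≤ surplus bw.1 q i) :
    indirectUtility B q = indirectUtility B p + indirectUtilityDirDeriv B p (q - p) := by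
  rw [indirectUtility, indirectUtility, indirectUtilityDirDeriv, ← List.sum_map_add]
  refine congrArg _ (List.map_congr_left fun bw hbw => ?_)
  rw [maxSurplus_eq_add_dirDeriv (h bw hbw), mul_add]

lemma eventually_indirectUtility_eq_add_dirDeriv (B : List ((Fin n → ℝ) × ℝ)) (p : Fin n → ℝ) :
    ∀ᶠ q in 𝓝 p, indirectUtility B q = indirectUtility B p + indirectUtilityDirDeriv B p (q - p) :=
  (B.finite_toSet.eventually_all.2 fun bw _ => eventually_forall_exists_demanded_le bw.1 p).mono
    fun _ hq => indirectUtility_eq_add_dirDeriv hq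

lemma surplus_project (b p q : Fin n → ℝ) (j : Fin (n + 1)) :
    surplus (project b p) q j = surplus b q j +
      ((if (0 : Fin (n + 1)) ∈ demandedSet b p then 0 else 1) -
        (if j ∈ demandedSet b p then 0 else 1)) := by
  induction j using Fin.cases with
  | zero => simp [surplus, extVec]
  | succ k =>
    simp only [surplus, extVec, Fin.cons_succ, project]
    split_ifs <;> ring

lemma surplus_project_add_one_le {b p : Fin n → ℝ} {i j : Fin (n + 1)}
    (hi : i ∈ demandedSet b p) (hj : j ∉ demandedSet b p) :
    surplus (project b p) p j + 1 ≤ surplus (project b p) p i := by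
  have := mem_demandedSet.1 hi j
  simp only [surplus_project, if_pos hi, if_neg hj]
  linarith

lemma demandedSet_project (b p : Fin n → ℝ) : demandedSet (project b p) p = demandedSet b p := by
  obtain ⟨i₀, hi₀⟩ := demandedSet_nonempty b p
  ext j
  rw [mem_demandedSet, mem_demandedSet]
  constructor
  · intro hj
    by_contra hj'
    have := surplus_project_add_one_le hi₀ (mt mem_demandedSet.1 hj')
    linarith [hj i₀]
  · intro hj k
    by_cases hk : k ∈ demandedSet b p
    · simp only [surplus_project, if_pos hk, if_pos (mem_demandedSet.2 hj)]
      linarith [hj k]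
    · linarith [surplus_project_add_one_le (mem_demandedSet.2 hj) hk]

lemma maxSurplusDirDeriv_project (b p : Fin n → ℝ) :
    maxSurplusDirDeriv (project b p) p = maxSurplusDirDeriv b p :=
  funext fun _ => Finset.sup'_congr _ (demandedSet_project b p) fun _ _ => rfl

lemma exists_demanded_le_project {b p q : Fin n → ℝ} (hq : ‖q - p‖ < 1 / 2)
    (j : Fin (n + 1)) :
    ∃ i ∈ demandedSet (project b p) p, surplus (project b p) q j ≤ surplus (project b p) q i := by
  rw [demandedSet_project]
  by_cases hj : j ∈ demandedSet b p
  · exact ⟨j, hj, le_rfl⟩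
  obtain ⟨i₀, hi₀⟩ := demandedSet_nonempty b p
  refine ⟨i₀, hi₀, ?_⟩
  rw [surplus_eq_surplus_sub _ p q j, surplus_eq_surplus_sub _ p q i₀]
  have hgap := surplus_project_add_one_le hi₀ hj
  have hj' := abs_le.1 ((abs_extVec_le_norm (q - p) j).trans hq.le)
  have hi₀' := abs_le.1 ((abs_extVec_le_norm (q - p) i₀).trans hq.le)
  linarith [hj'.1, hi₀'.2]

lemma indirectUtility_map_project (B : List ((Fin n → ℝ) × ℝ)) {p q : Fin n → ℝ}
    (hq : ‖q - p‖ < 1 / 2) :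
    indirectUtility (B.map fun bw => (project bw.1 p, bw.2)) q =
      indirectUtility (B.map fun bw => (project bw.1 p, bw.2)) p +
        indirectUtilityDirDeriv B p (q - p) := by
  have hderiv : indirectUtilityDirDeriv (B.map fun bw => (project bw.1 p, bw.2)) p =
      indirectUtilityDirDeriv B p := by
    funext v
    simp only [indirectUtilityDirDeriv, List.map_map, Function.comp_def, maxSurplusDirDeriv_project]
  rw [← hderiv]
  refine indirectUtility_eq_add_dirDeriv fun bw hbw => ?_
  obtain ⟨bw, -, rfl⟩ := List.mem_map.1 hbw
  exact exists_demanded_le_project hq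

lemma convexOn_indirectUtilityDirDeriv {B : List ((Fin n → ℝ) × ℝ)} {p : Fin n → ℝ} {δ : ℝ}
    (hδ : 0 < δ) (hconv : epsValid B p δ) : ConvexOn ℝ Set.univ (indirectUtilityDirDeriv B p) := by
  obtain ⟨ε, hε, hεδ, hloc⟩ : ∃ ε > 0, ε ≤ δ ∧ ∀ q ∈ ball p ε,
      indirectUtility B q = indirectUtility B p + indirectUtilityDirDeriv B p (q - p) := by
    obtain ⟨ε, hε, h⟩ := Metric.eventually_nhds_iff_ball.1
      (eventually_indirectUtility_eq_add_dirDeriv B p)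
    exact ⟨min ε δ, lt_min hε hδ, min_le_right _ _,
      fun q hq => h q (ball_subset_ball (min_le_left _ _) hq)⟩
  have hnear : ConvexOn ℝ ((p + ·) ⁻¹' ball p ε) (indirectUtilityDirDeriv B p) := by
    rw [epsValid, ← ball_eq] at hconv
    refine (((hconv.subset (ball_subset_ball hεδ) (convex_ball p ε)).translate_right p).add_const
      (-indirectUtility B p)).congr fun v hv => ?_
    simp [hloc _ hv]
  refine hnear.univ_of_pos_homogeneous ?_ fun t ht v => indirectUtilityDirDeriv_smul B p v ht.le
  exact (continuous_const.add continuous_id).continuousAt.preimage_mem_nhds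
    (by simpa using ball_mem_nhds p hε)

theorem stmt6_general (n : ℕ) (B : List ((Fin n → ℝ) × ℝ))
    (p : Fin n → ℝ) (hvalid : ∃ δ > 0, epsValid B p δ) :
    epsValid (B.map fun bw => (project bw.1 p, bw.2)) p (1 / 2) := by
  obtain ⟨δ, hδ, hconv⟩ := hvalid
  have hD := convexOn_indirectUtilityDirDeriv hδ hconv
  rw [epsValid, ← ball_eq]
  refine ((hD.translate_left (-p)).subset (Set.subset_univ _) (convex_ball p _)).add_const
    (indirectUtility (B.map fun bw => (project bw.1 p, bw.2)) p) |>.congr fun q hq => ?_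
  rw [indirectUtility_map_project B (q := q) (by rwa [← mem_ball_iff_norm])]
  simp [sub_eq_add_neg, add_comm]

/-- If `B` is locally valid at `p` (i.e. `f_B` is convex on some open ball
of positive radius around `p`) and `B'` is obtained from `B` by replacing every bid's value
vector by its projection with respect to `p` (keeping weights), then `B'` is `1/2`-valid at
`p`: `f_{B'}` is convex on the open `L∞`-ball of radius `1/2` around `p`. -/
theorem stmt6 (n : ℕ) (hn : 1 ≤ n) (B : List ((Fin n → ℝ) × ℝ))
    (hw : ∀ bw ∈ B, bw.2 = 1 ∨ bw.2 = -1)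
    (p : Fin n → ℝ) (hvalid : ∃ δ > 0, epsValid B p δ) :
    epsValid (B.map fun bw => (project bw.1 p, bw.2)) p (1 / 2) :=
  stmt6_general n B p hvalid

end
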